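/- Let L be a level datum such that L is empty, or the largest level of L is < 1, or the largest level of L is > 2 (i.e. L is a locally minimal level datum at infinity). Then B_L = 0 if and only if L = ∅. -/

import Mathlib

open Finset

/-- The ramification order of a level datum: the least common denominator of its
elements, i.e. the lcm of the denominators (`ram ∅ = 1`). -/
def ram (L : Finset ℚ) : ℕ := L.lcm Rat.den

/-- The least common denominator `d` of the "initial segment" of `L` consisting of the
elements `≥ k` (the elements come in decreasing order `k₀ > k₁ > ⋯`). -/
def segLcm (L : Finset ℚ) (k : ℚ) : ℕ := (L.filter (fun x => k ≤ x)).lcm Rat.den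

/-- A level datum: a finite set of positive rationals such that the least common
denominators `d₀, d₁, …` of the initial segments (for the decreasing order) are all `≥ 2`
and form a strictly increasing sequence.  (Since the `d_j` are increasing, requiring
`d_j ≥ 2` for all `j` is equivalent to `d₀ ≥ 2`, i.e. to the largest element not being
an integer.) -/
def IsLevelDatum (L : Finset ℚ) : Prop :=
  (∀ k ∈ L, 0 < k) ∧
  (∀ k ∈ L, 2 ≤ segLcm L k) ∧
  (∀ k ∈ L, ∀ k' ∈ L, k' < k → segLcm L k < segLcm L k')

/-- The largest level of `L` (junk value `0` for `L = ∅`). -/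
def maxLevel (L : Finset ℚ) : ℚ := WithBot.unbotD 0 L.max

/-- The numerator `s(k) := k · Ram(L) ∈ ℤ` of a level `k` of `L`. -/
def numer (L : Finset ℚ) (k : ℚ) : ℤ := (k * (ram L : ℚ)).num

/-- `σ := k₀ · Ram(L) ∈ ℤ`, the numerator of the largest level. -/
def sigma0 (L : Finset ℚ) : ℤ := numer L (maxLevel L)

/-- `gcd(s(x) for x ∈ s, Ram L)` : the gcd of `Ram L` together with the numerators of the
elements of a subset `s ⊆ L`. -/
def gSeg (L : Finset ℚ) (s : Finset ℚ) : ℕ :=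
  Nat.gcd (ram L) (s.gcd (fun x => (numer L x).natAbs))

/-- The quantity
`B_L = (r − (s₀,r))·s₀ + Σᵢ ((s₀,…,s_{i−1},r) − (s₀,…,s_i,r))·s_i − r² + 1`
(`B_∅ = 0`), equal to the dimension of the elementary wild character variety. -/
def B (L : Finset ℚ) : ℤ :=
  (∑ k ∈ L, ((gSeg L (L.filter (fun x => k < x)) : ℤ)
      - (gSeg L (L.filter (fun x => k ≤ x)) : ℤ)) * numer L k)
    - (ram L : ℤ) ^ 2 + 1

/-- A level datum is locally minimal at infinity if it is empty, or its largest level is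
`< 1` or `> 2`. -/
def LocallyMinimal (L : Finset ℚ) : Prop :=
  L = ∅ ∨ maxLevel L < 1 ∨ 2 < maxLevel L

/-- Rescaling of a level datum by a factor `c`, removing the integer elements. -/
def rescale (L : Finset ℚ) (c : ℚ) : Finset ℚ :=
  (L.image (fun k => c * k)).filter (fun x => x.den ≠ 1)

/-- The local simplification map `S_∞` on level data: if the largest level `k₀` satisfies
`1 < k₀ < 2`, rescale all the levels by `ρ/(σ−ρ)` (where `ρ = Ram L`, `σ = k₀·ρ`) and
remove the integer levels; otherwise do nothing. -/
def Sinf (L : Finset ℚ) : Finset ℚ :=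
  if 1 < maxLevel L ∧ maxLevel L < 2 then
    rescale L ((ram L : ℚ) / ((sigma0 L : ℚ) - (ram L : ℚ)))
  else L

/-!
Write `B_L + r² − 1 = ∑ₖ wₖ sₖ`, where the weights `wₖ = g_{<k} − g_{≤k}` are differences of
the decreasing gcd sequence, hence nonnegative, and telescope to `r − g_L ≤ r − 1`.
If all levels are `< 1`, then `sₖ ≤ r − 1`, so the sum is at most `(r − 1)²` and `B_L ≤ 2 − 2r < 0`.
If `k₀ > 2`, then `s₀ ≥ 2r + 1`, and since `k₀` is not an integer, `gcd(s₀, r)` is a proper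
divisor of `r`, so `w₀ = r − gcd(s₀, r) ≥ r / 2`; the single term `w₀ s₀` already exceeds
`r² − 1`, so `B_L > 0`.
-/

theorem Finset.sum_filter_lt_sub_filter_le {α β : Type*} [LinearOrder α] [AddCommGroup β]
    (F : Finset α → β) (s : Finset α) :
    ∑ k ∈ s, (F (s.filter (k < ·)) - F (s.filter (k ≤ ·))) = F ∅ - F s := by
  induction s using Finset.induction_on_min with
  | empty => simp
  | insert a s ha ih =>
    have has : a ∉ s := fun h => lt_irrefl a (ha a h)
    have hlt : ∀ k ∈ s, (insert a s).filter (k < ·) = s.filter (k < ·) := fun k hk => by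
      rw [Finset.filter_insert, if_neg (not_lt.2 (ha k hk).le)]
    have hle : ∀ k ∈ s, (insert a s).filter (k ≤ ·) = s.filter (k ≤ ·) := fun k hk => by
      rw [Finset.filter_insert, if_neg (not_le.2 (ha k hk))]
    have hlt_a : (insert a s).filter (a < ·) = s := by
      rw [Finset.filter_insert, if_neg (lt_irrefl a), Finset.filter_true_of_mem ha]
    have hle_a : (insert a s).filter (a ≤ ·) = insert a s :=
      Finset.filter_true_of_mem fun x hx => (Finset.mem_insert.1 hx).elim (·.ge) fun h => (ha x h).le
    rw [Finset.sum_insert has, hlt_a, hle_a, Finset.sum_congr rfl fun k hk => by rw [hlt k hk, hle k hk],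
      ih]
    abel

theorem Finset.filter_lt_max'_eq_empty {α : Type*} [LinearOrder α] (s : Finset α)
    (h : s.Nonempty) : s.filter (s.max' h < ·) = ∅ :=
  Finset.filter_eq_empty_iff.2 fun {x} hx => not_lt.2 (s.le_max' x hx)

theorem Finset.filter_le_max'_eq_singleton {α : Type*} [LinearOrder α] (s : Finset α)
    (h : s.Nonempty) : s.filter (s.max' h ≤ ·) = {s.max' h} := by
  ext x
  simp only [Finset.mem_filter, Finset.mem_singleton]
  constructor
  · rintro ⟨hx, hle⟩
    exact le_antisymm (s.le_max' x hx) hle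
  · rintro rfl
    exact ⟨s.max'_mem h, le_rfl⟩

theorem maxLevel_eq_max' {L : Finset ℚ} (h : L.Nonempty) : maxLevel L = L.max' h := by
  rw [maxLevel, ← Finset.coe_max' h]
  rfl

theorem ram_pos (L : Finset ℚ) : 0 < ram L := by
  rw [Nat.pos_iff_ne_zero, Ne, ram, Finset.lcm_eq_zero_iff]
  rintro ⟨q, -, hq⟩
  exact q.den_nz hq

section Levels

variable {L : Finset ℚ} {k : ℚ}

theorem den_dvd_ram (hk : k ∈ L) : k.den ∣ ram L :=
  Finset.dvd_lcm hk

theorem numer_cast (hk : k ∈ L) : (numer L k : ℚ) = k * ram L := by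
  obtain ⟨m, hm⟩ := den_dvd_ram hk
  have h : k * (ram L : ℚ) = ((k.num * m : ℤ) : ℚ) := by
    rw [hm]
    push_cast
    rw [← mul_assoc, Rat.mul_den_eq_num]
  rw [numer, h, Rat.num_intCast]

theorem numer_pos (hk : k ∈ L) (h0 : 0 < k) : 0 < numer L k := by
  have hr : (0 : ℚ) < ram L := by exact_mod_cast ram_pos L
  have : (0 : ℚ) < numer L k := by
    rw [numer_cast hk]
    positivity
  exact_mod_cast this

theorem numer_lt_ram (hk : k ∈ L) (h1 : k < 1) : numer L k < ram L := by
  have hr : (0 : ℚ) < ram L := by exact_mod_cast ram_pos L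
  have : (numer L k : ℚ) < ram L := by
    rw [numer_cast hk]
    nlinarith
  exact_mod_cast this

theorem two_mul_ram_lt_numer (hk : k ∈ L) (h2 : 2 < k) : 2 * (ram L : ℤ) < numer L k := by
  have hr : (0 : ℚ) < ram L := by exact_mod_cast ram_pos L
  have : 2 * (ram L : ℚ) < numer L k := by
    rw [numer_cast hk]
    nlinarith
  exact_mod_cast this

theorem ram_not_dvd_numer (hk : k ∈ L) (hden : k.den ≠ 1) : ¬(ram L : ℤ) ∣ numer L k := by
  rintro ⟨c, hc⟩
  have hr : (ram L : ℚ) ≠ 0 := by exact_mod_cast (ram_pos L).ne'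
  have hkc : k = c := by
    have h := numer_cast hk
    rw [hc] at h
    push_cast at h
    exact mul_right_cancel₀ hr (h.symm.trans (mul_comm _ _))
  exact hden (hkc ▸ Rat.den_intCast c)

end Levels

section Gcds

variable {L : Finset ℚ}

theorem gSeg_empty (L : Finset ℚ) : gSeg L ∅ = ram L := by
  simp [gSeg]

theorem gSeg_pos (L s : Finset ℚ) : 0 < gSeg L s :=
  Nat.gcd_pos_of_pos_left _ (ram_pos L)

theorem gSeg_anti {s t : Finset ℚ} (hst : s ⊆ t) : gSeg L t ≤ gSeg L s :=
  Nat.le_of_dvd (gSeg_pos L s) <| Nat.dvd_gcd (Nat.gcd_dvd_left _ _) <|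
    (Nat.gcd_dvd_right _ _).trans (Finset.dvd_gcd fun _ hb => Finset.gcd_dvd (hst hb))

theorem two_mul_gSeg_singleton_le {k : ℚ} (hk : k ∈ L) (hden : k.den ≠ 1) :
    2 * gSeg L {k} ≤ ram L := by
  have hdvd : gSeg L {k} ∣ ram L := Nat.gcd_dvd_left _ _
  have hne : ram L ≠ gSeg L {k} := by
    intro h
    apply ram_not_dvd_numer hk hden
    have : ram L ∣ (numer L k).natAbs := by
      rw [h, gSeg, Finset.gcd_singleton, normalize_eq]
      exact Nat.gcd_dvd_right _ _
    exact Int.natCast_dvd.2 this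
  by_contra hlt
  exact hne (Nat.eq_of_dvd_of_lt_two_mul (ram_pos L).ne' hdvd (not_le.1 hlt))

end Gcds

/-- The coefficient `(s₀,…,s_{i−1},r) − (s₀,…,s_i,r)` of `sᵢ = numer L kᵢ` in `B L`. -/
def weight (L : Finset ℚ) (k : ℚ) : ℤ :=
  gSeg L (L.filter (k < ·)) - gSeg L (L.filter (k ≤ ·))

theorem B_eq_sum_weight_mul_numer (L : Finset ℚ) :
    B L = ∑ k ∈ L, weight L k * numer L k - (ram L : ℤ) ^ 2 + 1 :=
  rfl

theorem weight_nonneg (L : Finset ℚ) (k : ℚ) : 0 ≤ weight L k :=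
  sub_nonneg.2 <| Nat.cast_le.2 <| gSeg_anti <| L.monotone_filter_right fun _ _ h => le_of_lt h

theorem sum_weight (L : Finset ℚ) : ∑ k ∈ L, weight L k = ram L - gSeg L L := by
  rw [← gSeg_empty L]
  exact Finset.sum_filter_lt_sub_filter_le (fun s => (gSeg L s : ℤ)) L

theorem weight_max' {L : Finset ℚ} (h : L.Nonempty) :
    weight L (L.max' h) = ram L - gSeg L {L.max' h} := by
  rw [weight, L.filter_lt_max'_eq_empty h, L.filter_le_max'_eq_singleton h, gSeg_empty]

theorem B_neg_of_forall_lt_one {L : Finset ℚ} (h1 : ∀ k ∈ L, k < 1) (hr : 2 ≤ ram L) :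
    B L < 0 := by
  have hsum : ∑ k ∈ L, weight L k * numer L k ≤ ((ram L : ℤ) - 1) * ((ram L : ℤ) - 1) :=
    calc ∑ k ∈ L, weight L k * numer L k ≤ ∑ k ∈ L, weight L k * ((ram L : ℤ) - 1) :=
          Finset.sum_le_sum fun k hk => mul_le_mul_of_nonneg_left
            (Int.le_sub_one_of_lt (numer_lt_ram hk (h1 k hk))) (weight_nonneg L k)
      _ = ((ram L : ℤ) - gSeg L L) * ((ram L : ℤ) - 1) := by rw [← Finset.sum_mul, sum_weight]
      _ ≤ ((ram L : ℤ) - 1) * ((ram L : ℤ) - 1) := by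
          have : (1 : ℤ) ≤ gSeg L L := by exact_mod_cast gSeg_pos L L
          gcongr
          omega
  rw [B_eq_sum_weight_mul_numer]
  have hr' : (2 : ℤ) ≤ ram L := by exact_mod_cast hr
  nlinarith

theorem B_pos_of_two_lt_max' {L : Finset ℚ} (hpos : ∀ k ∈ L, 0 < k) (h : L.Nonempty)
    (h2 : 2 < L.max' h) (hden : (L.max' h).den ≠ 1) : 0 < B L := by
  have hweight_max := weight_max' h
  set K := L.max' h
  have hK : K ∈ L := L.max'_mem h
  have hterm : weight L K * numer L K ≤ ∑ k ∈ L, weight L k * numer L k :=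
    Finset.single_le_sum (f := fun k => weight L k * numer L k)
      (fun k hk => mul_nonneg (weight_nonneg L k) (numer_pos hk (hpos k hk)).le) hK
  have hweight : (ram L : ℤ) ≤ 2 * weight L K := by
    have : 2 * (gSeg L {K} : ℤ) ≤ ram L := by exact_mod_cast two_mul_gSeg_singleton_le hK hden
    omega
  have hnumer := two_mul_ram_lt_numer hK h2
  have hw : 0 ≤ weight L K := weight_nonneg L K
  rw [B_eq_sum_weight_mul_numer]
  nlinarith

theorem IsLevelDatum.two_le_den_max' {L : Finset ℚ} (hL : IsLevelDatum L) (h : L.Nonempty) :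
    2 ≤ (L.max' h).den := by
  have := hL.2.1 _ (L.max'_mem h)
  rwa [segLcm, L.filter_le_max'_eq_singleton h, Finset.lcm_singleton, normalize_eq] at this

/-- for a locally minimal level datum at infinity, `B_L = 0 ↔ L = ∅`. -/
theorem stmt_3 (L : Finset ℚ) (hL : IsLevelDatum L) (hmin : LocallyMinimal L) :
    B L = 0 ↔ L = ∅ := by
  refine ⟨fun hB => ?_, fun h => by simp [h, B, ram]⟩
  by_contra hne
  have h : L.Nonempty := Finset.nonempty_iff_ne_empty.2 hne
  have hden := hL.two_le_den_max' h
  rw [LocallyMinimal, maxLevel_eq_max' h] at hmin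
  rcases hmin with hempty | hlt | hgt
  · exact hne hempty
  · have hr : 2 ≤ ram L := hden.trans (Nat.le_of_dvd (ram_pos L) (den_dvd_ram (L.max'_mem h)))
    have := B_neg_of_forall_lt_one (fun k hk => (L.le_max' k hk).trans_lt hlt) hr
    omega
  · have := B_pos_of_two_lt_max' hL.1 h hgt (by omega)
    omega
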